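/- Let r ≥ 1 and let c : X×X → ℝ_+ be a continuous semimetric of strong negative type on the compact Polish space X. Then for all probability measures μ, ν on X, DLOT_{r,c}(μ,ν) = 0 if and only if μ = ν. -/

import Mathlib

open MeasureTheory Filter
open scoped ENNReal NNReal BigOperators

noncomputable section

/-- `π` is a coupling of `μ` and `ν`. -/
def IsCoupling {X Y : Type*} [MeasurableSpace X] [MeasurableSpace Y]
    (μ : Measure X) (ν : Measure Y) (π : Measure (X × Y)) : Prop :=
  IsProbabilityMeasure π ∧ π.map Prod.fst = μ ∧ π.map Prod.snd = ν

/-- `π` is a coupling of `μ` and `ν` of nonnegative rank at most `r`, i.e. it can be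
written as `π = Σ_{i=1}^r λ_i μ_i ⊗ ν_i` with strictly positive weights `λ ∈ Δ_r^*`. -/
def IsLowRankCoupling {X Y : Type*} [MeasurableSpace X] [MeasurableSpace Y]
    (r : ℕ) (μ : Measure X) (ν : Measure Y) (π : Measure (X × Y)) : Prop :=
  IsCoupling μ ν π ∧
  ∃ (lam : Fin r → ℝ≥0) (μs : Fin r → Measure X) (νs : Fin r → Measure Y),
    (∀ i, 0 < lam i) ∧ (∑ i, lam i) = 1 ∧
    (∀ i, IsProbabilityMeasure (μs i)) ∧ (∀ i, IsProbabilityMeasure (νs i)) ∧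
    π = ∑ i, lam i • (μs i).prod (νs i)

/-- Optimal transport cost `OT_c(μ,ν)`. -/
def OT {X Y : Type*} [MeasurableSpace X] [MeasurableSpace Y]
    (c : X → Y → ℝ) (μ : Measure X) (ν : Measure Y) : ℝ :=
  sInf {t | ∃ π, IsCoupling μ ν π ∧ t = ∫ p, c p.1 p.2 ∂π}

/-- Low-rank optimal transport cost `LOT_{r,c}(μ,ν)`. -/
def LOT {X Y : Type*} [MeasurableSpace X] [MeasurableSpace Y]
    (r : ℕ) (c : X → Y → ℝ) (μ : Measure X) (ν : Measure Y) : ℝ :=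
  sInf {t | ∃ π, IsLowRankCoupling r μ ν π ∧ t = ∫ p, c p.1 p.2 ∂π}

/-- Debiased low-rank optimal transport `DLOT_{r,c}(μ,ν)`. -/
def DLOT {X : Type*} [MeasurableSpace X]
    (r : ℕ) (c : X → X → ℝ) (μ ν : Measure X) : ℝ :=
  LOT r c μ ν - (LOT r c μ μ + LOT r c ν ν) / 2

/-- The `k`-th dyadic entropy number of a subset `W` of a metric space:
the infimum of radii `ε` such that `W` is covered by `2^k` closed balls of radius `ε`. -/
def entropyNum {Z : Type*} [MetricSpace Z] (W : Set Z) (k : ℕ) : ℝ :=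
  sInf {ε : ℝ | 0 < ε ∧ ∃ z : Fin (2 ^ k) → Z, W ⊆ ⋃ i, Metric.closedBall (z i) ε}

/-- `c` is a semimetric of negative type: symmetric, vanishing exactly on the diagonal,
and `Σ_{i,j} α_i α_j c(x_i,x_j) ≤ 0` whenever `Σ_i α_i = 0`. -/
def IsSemimetricNegType {X : Type*} (c : X → X → ℝ) : Prop :=
  (∀ x y, c x y = c y x) ∧ (∀ x y, c x y = 0 ↔ x = y) ∧
  ∀ (n : ℕ), 2 ≤ n → ∀ (x : Fin n → X) (α : Fin n → ℝ), (∑ i, α i) = 0 →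
    ∑ i, ∑ j, α i * α j * c (x i) (x j) ≤ 0

/-- `c` is a semimetric of strong negative type: of negative type, and for all probability
measures `μ ≠ ν`, `∫ c d[μ−ν]⊗[μ−ν] < 0`, i.e.
`∫c dμ⊗μ + ∫c dν⊗ν − 2∫c dμ⊗ν < 0`. -/
def IsSemimetricStrongNegType {X : Type*} [MeasurableSpace X] (c : X → X → ℝ) : Prop :=
  IsSemimetricNegType c ∧
  ∀ μ ν : Measure X, IsProbabilityMeasure μ → IsProbabilityMeasure ν → μ ≠ ν →
    (∫ p, c p.1 p.2 ∂(μ.prod μ)) + (∫ p, c p.1 p.2 ∂(ν.prod ν))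
      - 2 * ∫ p, c p.1 p.2 ∂(μ.prod ν) < 0

/-! For a low-rank coupling `π = ∑ λᵢ μᵢ ⊗ νᵢ` of `μ` and `ν`, the measures `∑ λᵢ μᵢ ⊗ μᵢ` and
`∑ λᵢ νᵢ ⊗ νᵢ` are low-rank couplings of `(μ, μ)` and `(ν, ν)`, so
`2 ∫ c dπ - LOT(μ, μ) - LOT(ν, ν) ≥ ∑ λᵢ E(μᵢ, νᵢ)`, where `E(p, q) = -∫ c d(p - q) ⊗ (p - q)` is
the energy distance. As `E ≥ 0` on pairs of probability measures, `E` is a positive semidefinite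
quadratic form in `p - q`, hence convex, so `∑ λᵢ E(μᵢ, νᵢ) ≥ E(μ, ν)`. Thus
`2 DLOT(μ, ν) ≥ E(μ, ν)`, which is positive for `μ ≠ ν` by strong negative type. -/

lemma Finset.sum_sum_mul_mul_le_sum_mul_of_add_le {ι : Type*} [Fintype ι] (w : ι → ℝ)
    (hw : ∀ i, 0 ≤ w i) (hw1 : ∑ i, w i = 1) (A : ι → ι → ℝ)
    (hA : ∀ i j, A i j + A j i ≤ A i i + A j j) :
    ∑ i, ∑ j, w i * w j * A i j ≤ ∑ i, w i * A i i := by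
  have hdiag : ∑ i, ∑ j, w i * w j * A i i = ∑ i, w i * A i i := by
    refine Finset.sum_congr rfl fun i _ => ?_
    rw [← Finset.sum_mul, ← Finset.mul_sum, hw1]
    ring
  have hswap : ∑ i, ∑ j, w i * w j * A j i = ∑ i, ∑ j, w i * w j * A i j := by
    rw [Finset.sum_comm]
    simp only [mul_comm (w _) (w _)]
  have hsym : ∑ i, ∑ j, w i * w j * A j j = ∑ i, ∑ j, w i * w j * A i i := by
    rw [Finset.sum_comm]
    simp only [mul_comm (w _) (w _)]
  have hle : ∑ i, ∑ j, w i * w j * (A i j + A j i) ≤ ∑ i, ∑ j, w i * w j * (A i i + A j j) :=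
    Finset.sum_le_sum fun i _ => Finset.sum_le_sum fun j _ =>
      mul_le_mul_of_nonneg_left (hA i j) (mul_nonneg (hw i) (hw j))
  simp only [mul_add, Finset.sum_add_distrib, hswap, hsym, hdiag] at hle
  linarith

section Mixture

variable {X Y : Type*} [MeasurableSpace X] [MeasurableSpace Y] {ι : Type*} [Fintype ι]

lemma isProbabilityMeasure_sum_smul (w : ι → ℝ≥0) (hw : ∑ i, w i = 1) (m : ι → Measure X)
    [∀ i, IsProbabilityMeasure (m i)] : IsProbabilityMeasure (∑ i, w i • m i) := by
  constructor
  simp only [Measure.coe_finsetSum, Finset.sum_apply, Measure.smul_apply, measure_univ,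
    ENNReal.smul_def, smul_eq_mul, mul_one]
  exact_mod_cast congrArg ((↑) : ℝ≥0 → ℝ≥0∞) hw

lemma map_fst_sum_smul_prod (w : ι → ℝ≥0) (μs : ι → Measure X) (νs : ι → Measure Y)
    [∀ i, IsFiniteMeasure (μs i)] [∀ i, IsProbabilityMeasure (νs i)] :
    (∑ i, w i • (μs i).prod (νs i)).map Prod.fst = ∑ i, w i • μs i := by
  simp [Measure.map_finset_sum' measurable_fst.aemeasurable, Measure.map_smul]

lemma map_snd_sum_smul_prod (w : ι → ℝ≥0) (μs : ι → Measure X) (νs : ι → Measure Y)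
    [∀ i, IsProbabilityMeasure (μs i)] [∀ i, IsFiniteMeasure (νs i)] :
    (∑ i, w i • (μs i).prod (νs i)).map Prod.snd = ∑ i, w i • νs i := by
  simp [Measure.map_finset_sum' measurable_snd.aemeasurable, Measure.map_smul]

lemma isLowRankCoupling_sum_smul_prod {r : ℕ} (w : Fin r → ℝ≥0) (hw0 : ∀ i, 0 < w i)
    (hw : ∑ i, w i = 1) (μs : Fin r → Measure X) (νs : Fin r → Measure Y)
    [hμ : ∀ i, IsProbabilityMeasure (μs i)] [hν : ∀ i, IsProbabilityMeasure (νs i)] :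
    IsLowRankCoupling r (∑ i, w i • μs i) (∑ i, w i • νs i) (∑ i, w i • (μs i).prod (νs i)) :=
  ⟨⟨isProbabilityMeasure_sum_smul w hw _, map_fst_sum_smul_prod w μs νs,
    map_snd_sum_smul_prod w μs νs⟩, w, μs, νs, hw0, hw, hμ, hν, rfl⟩

lemma isLowRankCoupling_prod {r : ℕ} (hr : 1 ≤ r) (μ : Measure X) (ν : Measure Y)
    [IsProbabilityMeasure μ] [IsProbabilityMeasure ν] :
    IsLowRankCoupling r μ ν (μ.prod ν) := by
  have hw : ∑ _i : Fin r, (r : ℝ≥0)⁻¹ = 1 := by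
    simp only [Finset.sum_const, Finset.card_univ, Fintype.card_fin, nsmul_eq_mul]
    exact mul_inv_cancel₀ (by positivity)
  simpa only [← Finset.sum_smul, hw, one_smul] using
    isLowRankCoupling_sum_smul_prod (fun _ => (r : ℝ≥0)⁻¹) (fun _ => by positivity) hw
      (fun _ => μ) (fun _ => ν)

end Mixture

def prodCost {X : Type*} [MeasurableSpace X] (c : X → X → ℝ) (p q : Measure X) : ℝ :=
  ∫ z, c z.1 z.2 ∂(p.prod q)

def energyDist {X : Type*} [MeasurableSpace X] (c : X → X → ℝ) (p q : Measure X) : ℝ :=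
  2 * prodCost c p q - prodCost c p p - prodCost c q q

lemma prodCost_comm {X : Type*} [MeasurableSpace X] {c : X → X → ℝ}
    (hsymm : ∀ x y, c x y = c y x) (p q : Measure X) [SFinite p] [SFinite q] :
    prodCost c p q = prodCost c q p := by
  rw [prodCost, prodCost, ← integral_prod_swap]
  simp only [Prod.fst_swap, Prod.snd_swap, hsymm]

lemma energyDist_pos {X : Type*} [MeasurableSpace X] {c : X → X → ℝ}
    (hc : IsSemimetricStrongNegType c) {p q : Measure X} [IsProbabilityMeasure p]
    [IsProbabilityMeasure q] (hpq : p ≠ q) : 0 < energyDist c p q := by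
  have := hc.2 p q ‹_› ‹_› hpq
  rw [energyDist, prodCost, prodCost, prodCost]
  linarith

lemma energyDist_nonneg {X : Type*} [MeasurableSpace X] {c : X → X → ℝ}
    (hc : IsSemimetricStrongNegType c) (p q : Measure X) [IsProbabilityMeasure p]
    [IsProbabilityMeasure q] : 0 ≤ energyDist c p q := by
  rcases eq_or_ne p q with rfl | hpq
  · rw [energyDist]
    linarith
  · exact (energyDist_pos hc hpq).le

section LowRank

variable {X Y : Type*} [MeasurableSpace X] [MeasurableSpace Y] {c : X → Y → ℝ} {r : ℕ}
  {μ : Measure X} {ν : Measure Y}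

lemma lot_le_integral (hc0 : ∀ x y, 0 ≤ c x y) {π : Measure (X × Y)}
    (hπ : IsLowRankCoupling r μ ν π) : LOT r c μ ν ≤ ∫ z, c z.1 z.2 ∂π :=
  csInf_le ⟨0, by rintro t ⟨π, -, rfl⟩; exact integral_nonneg fun z => hc0 _ _⟩ ⟨π, hπ, rfl⟩

lemma le_lot_of_forall_le (hr : 1 ≤ r) [IsProbabilityMeasure μ] [IsProbabilityMeasure ν] {b : ℝ}
    (h : ∀ π, IsLowRankCoupling r μ ν π → b ≤ ∫ z, c z.1 z.2 ∂π) : b ≤ LOT r c μ ν :=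
  le_csInf ⟨_, μ.prod ν, isLowRankCoupling_prod hr μ ν, rfl⟩ <| by
    rintro t ⟨π, hπ, rfl⟩
    exact h π hπ

end LowRank

section Cost

variable {X : Type*} [MetricSpace X] [CompactSpace X] [MeasurableSpace X] [BorelSpace X]
  {c : X → X → ℝ} {ι : Type*} [Fintype ι]

lemma integrable_cost (hc : Continuous fun z : X × X => c z.1 z.2) (m : Measure (X × X))
    [IsFiniteMeasure m] : Integrable (fun z : X × X => c z.1 z.2) m :=
  hc.integrable_of_hasCompactSupport (HasCompactSupport.of_compactSpace _)

lemma integral_cost_sum_smul (hc : Continuous fun z : X × X => c z.1 z.2) (w : ι → ℝ≥0)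
    (m : ι → Measure (X × X)) [∀ i, IsFiniteMeasure (m i)] :
    ∫ z, c z.1 z.2 ∂(∑ i, w i • m i) = ∑ i, (w i : ℝ) * ∫ z, c z.1 z.2 ∂(m i) := by
  rw [integral_finsetSum_measure fun i _ => integrable_cost hc _]
  simp [integral_smul_nnreal_measure, NNReal.smul_def]

lemma prodCost_sum_smul_left (hc : Continuous fun z : X × X => c z.1 z.2) (w : ι → ℝ≥0)
    (p : ι → Measure X) [∀ i, IsFiniteMeasure (p i)] (q : Measure X) [IsFiniteMeasure q] :
    prodCost c (∑ i, w i • p i) q = ∑ i, (w i : ℝ) * prodCost c (p i) q := by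
  rw [prodCost, ← Measure.sum_fintype, Measure.prod_sum_left, Measure.sum_fintype]
  simp only [Measure.prod_smul_left]
  exact integral_cost_sum_smul hc w _

lemma prodCost_sum_smul_right (hc : Continuous fun z : X × X => c z.1 z.2) (w : ι → ℝ≥0)
    (p : Measure X) [IsFiniteMeasure p] (q : ι → Measure X) [∀ i, IsFiniteMeasure (q i)] :
    prodCost c p (∑ i, w i • q i) = ∑ i, (w i : ℝ) * prodCost c p (q i) := by
  rw [prodCost, ← Measure.sum_fintype, Measure.prod_sum_right, Measure.sum_fintype]
  simp only [Measure.prod_smul_right]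
  exact integral_cost_sum_smul hc w _

lemma prodCost_sum_smul_sum_smul (hc : Continuous fun z : X × X => c z.1 z.2)
    {κ : Type*} [Fintype κ] (w : ι → ℝ≥0) (p : ι → Measure X) [∀ i, IsFiniteMeasure (p i)]
    (v : κ → ℝ≥0) (q : κ → Measure X) [∀ j, IsFiniteMeasure (q j)] :
    prodCost c (∑ i, w i • p i) (∑ j, v j • q j)
      = ∑ i, ∑ j, (w i : ℝ) * v j * prodCost c (p i) (q j) := by
  simp only [prodCost_sum_smul_left hc, prodCost_sum_smul_right hc, Finset.mul_sum, mul_assoc]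

/-- With `σ₁ = a - b` and `σ₂ = d - e` this is `Q(σ₁ - σ₂) ≥ 0` for `Q(σ) = -∫ c d(σ ⊗ σ)`: it is
`energyDist ≥ 0` at the midpoints `(a + e) / 2` and `(d + b) / 2`, whose difference is
`(σ₁ - σ₂) / 2`. -/
lemma cross_energy_le_energyDist_add (hc : Continuous fun z : X × X => c z.1 z.2)
    (hneg : IsSemimetricStrongNegType c) (a b d e : Measure X) [IsProbabilityMeasure a]
    [IsProbabilityMeasure b] [IsProbabilityMeasure d] [IsProbabilityMeasure e] :
    (2 * prodCost c a e - prodCost c a d - prodCost c b e)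
      + (2 * prodCost c d b - prodCost c d a - prodCost c e b)
      ≤ energyDist c a b + energyDist c d e := by
  have hhalf : ∑ _k : Fin 2, (2⁻¹ : ℝ≥0) = 1 := by simp
  have : ∀ k, IsProbabilityMeasure (![a, e] k) := Fin.forall_fin_two.2 ⟨‹_›, ‹_›⟩
  have : ∀ k, IsProbabilityMeasure (![d, b] k) := Fin.forall_fin_two.2 ⟨‹_›, ‹_›⟩
  have := isProbabilityMeasure_sum_smul _ hhalf ![a, e]
  have := isProbabilityMeasure_sum_smul _ hhalf ![d, b]
  have hmid := energyDist_nonneg hneg (∑ k, (2⁻¹ : ℝ≥0) • ![a, e] k)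
    (∑ k, (2⁻¹ : ℝ≥0) • ![d, b] k)
  rw [energyDist, prodCost_sum_smul_sum_smul hc, prodCost_sum_smul_sum_smul hc,
    prodCost_sum_smul_sum_smul hc] at hmid
  simp only [Fin.sum_univ_two, Matrix.cons_val_zero, Matrix.cons_val_one, NNReal.coe_inv,
    NNReal.coe_ofNat] at hmid
  rw [energyDist, energyDist, prodCost_comm hneg.1.1 d a, prodCost_comm hneg.1.1 e b]
  linarith [prodCost_comm hneg.1.1 e a, prodCost_comm hneg.1.1 b d, prodCost_comm hneg.1.1 e b,
    prodCost_comm hneg.1.1 e d]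

lemma energyDist_sum_smul_le (hc : Continuous fun z : X × X => c z.1 z.2)
    (hneg : IsSemimetricStrongNegType c) (w : ι → ℝ≥0) (hw : ∑ i, w i = 1)
    (μs νs : ι → Measure X) [∀ i, IsProbabilityMeasure (μs i)]
    [∀ i, IsProbabilityMeasure (νs i)] :
    energyDist c (∑ i, w i • μs i) (∑ i, w i • νs i)
      ≤ ∑ i, (w i : ℝ) * energyDist c (μs i) (νs i) := by
  set A : ι → ι → ℝ := fun i j =>
    2 * prodCost c (μs i) (νs j) - prodCost c (μs i) (μs j) - prodCost c (νs i) (νs j)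
  have hexpand : energyDist c (∑ i, w i • μs i) (∑ i, w i • νs i)
      = ∑ i, ∑ j, (w i : ℝ) * w j * A i j := by
    simp only [energyDist, prodCost_sum_smul_sum_smul hc, A, Finset.mul_sum,
      ← Finset.sum_sub_distrib]
    exact Finset.sum_congr rfl fun i _ => Finset.sum_congr rfl fun j _ => by ring
  rw [hexpand]
  exact Finset.sum_sum_mul_mul_le_sum_mul_of_add_le _ (fun i => (w i).coe_nonneg)
    (by exact_mod_cast hw) A fun i j => cross_energy_le_energyDist_add hc hneg _ _ _ _

lemma lot_add_energyDist_le_integral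
    (hc : Continuous fun z : X × X => c z.1 z.2) (hc0 : ∀ x y, 0 ≤ c x y)
    (hneg : IsSemimetricStrongNegType c) {r : ℕ} {μ ν : Measure X} {π : Measure (X × X)}
    (hπ : IsLowRankCoupling r μ ν π) :
    (LOT r c μ μ + LOT r c ν ν + energyDist c μ ν) / 2 ≤ ∫ z, c z.1 z.2 ∂π := by
  obtain ⟨⟨-, hfst, hsnd⟩, w, μs, νs, hw0, hw, hμs, hνs, rfl⟩ := hπ
  obtain rfl : ∑ i, w i • μs i = μ := (map_fst_sum_smul_prod w μs νs).symm.trans hfst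
  obtain rfl : ∑ i, w i • νs i = ν := (map_snd_sum_smul_prod w μs νs).symm.trans hsnd
  have hμμ := lot_le_integral hc0 (isLowRankCoupling_sum_smul_prod w hw0 hw μs μs)
  have hνν := lot_le_integral hc0 (isLowRankCoupling_sum_smul_prod w hw0 hw νs νs)
  have hjensen := energyDist_sum_smul_le hc hneg w hw μs νs
  rw [integral_cost_sum_smul hc] at hμμ hνν ⊢
  simp only [energyDist, prodCost, mul_sub, Finset.sum_sub_distrib, mul_left_comm _ (2 : ℝ),
    ← Finset.mul_sum] at hjensen ⊢
  linarith

end Cost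

theorem dlot_eq_zero_iff_general {X : Type*}
    [MetricSpace X] [CompactSpace X] [MeasurableSpace X] [BorelSpace X]
    (c : X → X → ℝ) (hc_cont : Continuous fun p : X × X => c p.1 p.2)
    (hc_nonneg : ∀ x y, 0 ≤ c x y)
    (hc_sneg : IsSemimetricStrongNegType c)
    (r : ℕ) (hr : 1 ≤ r)
    (μ ν : Measure X) [IsProbabilityMeasure μ] [IsProbabilityMeasure ν] :
    DLOT r c μ ν = 0 ↔ μ = ν := by
  refine ⟨fun h => ?_, fun h => by rw [h, DLOT]; ring⟩
  by_contra hne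
  have hgap := energyDist_pos hc_sneg hne
  have hlot : (LOT r c μ μ + LOT r c ν ν + energyDist c μ ν) / 2 ≤ LOT r c μ ν :=
    le_lot_of_forall_le hr fun π hπ =>
      lot_add_energyDist_le_integral hc_cont hc_nonneg hc_sneg hπ
  rw [DLOT] at h
  linarith

/-- If `c` is a continuous semimetric of strong negative type then
`DLOT_{r,c}(μ,ν) = 0` iff `μ = ν`. -/
theorem dlot_eq_zero_iff {X : Type*}
    [MetricSpace X] [CompactSpace X] [Nonempty X] [MeasurableSpace X] [BorelSpace X]
    (c : X → X → ℝ) (hc_cont : Continuous fun p : X × X => c p.1 p.2)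
    (hc_nonneg : ∀ x y, 0 ≤ c x y)
    (hc_sneg : IsSemimetricStrongNegType c)
    (r : ℕ) (hr : 1 ≤ r)
    (μ ν : Measure X) [IsProbabilityMeasure μ] [IsProbabilityMeasure ν] :
    DLOT r c μ ν = 0 ↔ μ = ν :=
  dlot_eq_zero_iff_general c hc_cont hc_nonneg hc_sneg r hr μ ν

end
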